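/- arXiv:2410.03805 — 2 statements merged into one kernel-verified Lean document; each statement's English description precedes it below -/
import Mathlib

section
/- Let n, L, d_q be positive integers with L dividing n, set s = n/L, and let Q, K be real n × d_q matrices. Define the masked attention-score matrix S of dimension n × n by S[i, j] = exp(⟨Q_i, K_j⟩/√d_q) / Σ_{k : i−L+1 ≤ k ≤ i, k ≥ 0} exp(⟨Q_i, K_k⟩/√d_q) if i − L + 1 ≤ j ≤ i, and S[i, j] = 0 otherwise. Define T_Q, T_K, T_A as in the blocked construction (T_Q[r, i_1, t] = Q[rL + i_1, t]; T_K[r, j_1, t] = K[(r−1)L + 1 + j_1, t] if (r−1)L + 1 + j_1 ≥ 0, else 0; T_A[r,·,·] = T_Q[r,·,·] T_K[r,·,·]^T), and define the tensor T_S of dimensions s × L × (2L−1) by T_S[r, i_1, j_1] = exp(T_A[r, i_1, j_1]/√d_q) / Σ_{k : i_1 ≤ k ≤ i_1+L−1, (r−1)L+1+k ≥ 0} exp(T_A[r, i_1, k]/√d_q) if i_1 ≤ j_1 ≤ i_1 + L − 1 and (r−1)L + 1 + j_1 ≥ 0, and T_S[r, i_1, j_1] = 0 otherwise. Then for each i ∈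 {0,...,n−1} and j with 0 ≤ j ≤ n−1 and i − L + 1 ≤ j ≤ i, setting i_1 = i mod L, r = (i − i_1)/L and j_1 = j − (r−1)L − 1, one has S[i, j] = T_S[r, i_1, j_1]; moreover all entries of S and T_S not covered by this correspondence are zero. -/
open Matrix

theorem blocked_masked_softmax_equals_LAM_scores
    (n L dq s : ℕ) (hn : 0 < n) (hL : 0 < L) (hdq : 0 < dq)
    (hdvd : L ∣ n) (hs : s = n / L)
    (Q K : Matrix (Fin n) (Fin dq) ℝ)
    -- the blocked tensors
    (TQ : Fin s → Fin L → Fin dq → ℝ)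
    (TK : Fin s → Fin (2 * L - 1) → Fin dq → ℝ)
    (TA : Fin s → Fin L → Fin (2 * L - 1) → ℝ)
    (TS : Fin s → Fin L → Fin (2 * L - 1) → ℝ)
    -- the masked attention-score matrix of LAM
    (S : Matrix (Fin n) (Fin n) ℝ)
    -- `T_Q[r, i₁, t] = Q[rL + i₁, t]`
    (hTQ : ∀ (r : Fin s) (i1 : Fin L) (t : Fin dq)
      (hm : r.val * L + i1.val < n), TQ r i1 t = Q ⟨r.val * L + i1.val, hm⟩ t)
    -- `T_K[r, j₁, t] = K[(r−1)L + 1 + j₁, t]` if `(r−1)L + 1 + j₁ ≥ 0`, else `0`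
    (hTK : ∀ (r : Fin s) (j1 : Fin (2 * L - 1)) (t : Fin dq),
      (((r.val : ℤ) - 1) * L + 1 + (j1.val : ℤ) < 0 → TK r j1 t = 0) ∧
      (∀ (hm : (((r.val : ℤ) - 1) * L + 1 + (j1.val : ℤ)).toNat < n),
        0 ≤ ((r.val : ℤ) - 1) * L + 1 + (j1.val : ℤ) →
        TK r j1 t = K ⟨(((r.val : ℤ) - 1) * L + 1 + (j1.val : ℤ)).toNat, hm⟩ t))
    -- `T_A[r,·,·] = T_Q[r,·,·] · T_K[r,·,·]ᵀ`
    (hTA : ∀ (r : Fin s) (i1 : Fin L) (j1 : Fin (2 * L - 1)),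
      TA r i1 j1 = ∑ t, TQ r i1 t * TK r j1 t)
    -- `S[i,j] = exp(⟨Q_i,K_j⟩/√d_q) / Σ_{k : i−L+1 ≤ k ≤ i, k ≥ 0} exp(⟨Q_i,K_k⟩/√d_q)`
    -- when `i − L + 1 ≤ j ≤ i`, and `S[i,j] = 0` otherwise
    (hS : ∀ (i j : Fin n), S i j =
      if (i.val : ℤ) - L + 1 ≤ (j.val : ℤ) ∧ (j.val : ℤ) ≤ (i.val : ℤ) then
        Real.exp ((∑ t, Q i t * K j t) / Real.sqrt (dq : ℝ)) /
          ∑ k ∈ Finset.univ.filter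
              (fun k : Fin n => (i.val : ℤ) - L + 1 ≤ (k.val : ℤ) ∧ (k.val : ℤ) ≤ (i.val : ℤ)),
            Real.exp ((∑ t, Q i t * K k t) / Real.sqrt (dq : ℝ))
      else 0)
    -- the blocked masked softmax tensor `T_S`
    (hTS : ∀ (r : Fin s) (i1 : Fin L) (j1 : Fin (2 * L - 1)), TS r i1 j1 =
      if i1.val ≤ j1.val ∧ j1.val ≤ i1.val + L - 1 ∧
          0 ≤ ((r.val : ℤ) - 1) * L + 1 + (j1.val : ℤ) then
        Real.exp (TA r i1 j1 / Real.sqrt (dq : ℝ)) /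
          ∑ k ∈ Finset.univ.filter
              (fun k : Fin (2 * L - 1) => i1.val ≤ k.val ∧ k.val ≤ i1.val + L - 1 ∧
                0 ≤ ((r.val : ℤ) - 1) * L + 1 + (k.val : ℤ)),
            Real.exp (TA r i1 k / Real.sqrt (dq : ℝ))
      else 0) :
    -- conclusion: the correspondence `S[i,j] = T_S[r, i₁, j₁]`, and all entries of
    -- `S` and `T_S` not covered by this correspondence are zero
    (∀ (i j : ℕ) (hi : i < n) (hj : j < n),
      (i : ℤ) - L + 1 ≤ (j : ℤ) → j ≤ i →
      ∀ (hr : (i - i % L) / L < s) (hi1 : i % L < L)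
        (hneg : 0 ≤ (j : ℤ) - ((((i - i % L) / L : ℕ) : ℤ) - 1) * L - 1)
        (hj1 : ((j : ℤ) - ((((i - i % L) / L : ℕ) : ℤ) - 1) * L - 1).toNat < 2 * L - 1),
      S ⟨i, hi⟩ ⟨j, hj⟩ =
        TS ⟨(i - i % L) / L, hr⟩ ⟨i % L, hi1⟩
          ⟨((j : ℤ) - ((((i - i % L) / L : ℕ) : ℤ) - 1) * L - 1).toNat, hj1⟩) ∧
    (∀ i j : Fin n,
      ¬((i.val : ℤ) - L + 1 ≤ (j.val : ℤ) ∧ (j.val : ℤ) ≤ (i.val : ℤ)) → S i j = 0) ∧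
    (∀ (r : Fin s) (i1 : Fin L) (j1 : Fin (2 * L - 1)),
      ¬(i1.val ≤ j1.val ∧ j1.val ≤ i1.val + L - 1 ∧
          0 ≤ ((r.val : ℤ) - 1) * L + 1 + (j1.val : ℤ)) → TS r i1 j1 = 0) := by
  refine ⟨?_, fun i j h => by rw [hS]; exact if_neg h,
    fun r i1 j1 h => by rw [hTS]; exact if_neg h⟩
  intro i j hi hj hij1 hij2 hr hi1 hneg hj1
  have hdm : L * (i / L) + i % L = i := Nat.div_add_mod i L
  have hdivL : (i - i % L) / L = i / L := by
    have h1 : i - i % L = L * (i / L) := by omega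
    rw [h1, Nat.mul_div_cancel_left _ hL]
  have hE : ((i - i % L) / L) * L + i % L = i := by
    rw [hdivL, Nat.mul_comm]; exact hdm
  have hEZ : ((((i - i % L) / L : ℕ) : ℤ)) * L = (i : ℤ) - ((i % L : ℕ) : ℤ) := by
    have h2 : (((i - i % L) / L * L : ℕ) : ℤ) = (i : ℤ) - ((i % L : ℕ) : ℤ) := by omega
    push_cast at h2
    exact h2
  have hA : ((((i - i % L) / L : ℕ) : ℤ) - 1) * L
      = (i : ℤ) - ((i % L : ℕ) : ℤ) - L := by
    rw [sub_one_mul, hEZ]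
  -- the key computation of TA entries
  have hTAval : ∀ (k : Fin n) (k1 : Fin (2 * L - 1)),
      (k1.val : ℤ) = (k.val : ℤ) - ((((i - i % L) / L : ℕ) : ℤ) - 1) * L - 1 →
      (i : ℤ) - L + 1 ≤ (k.val : ℤ) → (k.val : ℤ) ≤ (i : ℤ) →
      TA ⟨(i - i % L) / L, hr⟩ ⟨i % L, hi1⟩ k1 = ∑ t, Q ⟨i, hi⟩ t * K k t := by
    intro k k1 hk hk1 hk2
    rw [hTA]
    refine Finset.sum_congr rfl fun t _ => ?_
    have hm : ((i - i % L) / L) * L + i % L < n := by omega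
    rw [hTQ ⟨(i - i % L) / L, hr⟩ ⟨i % L, hi1⟩ t (by simpa using hm)]
    have hnn : 0 ≤ (((⟨(i - i % L) / L, hr⟩ : Fin s).val : ℤ) - 1) * L + 1 + (k1.val : ℤ) := by
      simp only [Fin.val_mk]; omega
    have hm2 : ((((⟨(i - i % L) / L, hr⟩ : Fin s).val : ℤ) - 1) * L + 1 + (k1.val : ℤ)).toNat < n := by
      simp only [Fin.val_mk]; omega
    rw [(hTK ⟨(i - i % L) / L, hr⟩ k1 t).2 hm2 hnn]
    have eQ : (⟨(⟨(i - i % L) / L, hr⟩ : Fin s).val * L + (⟨i % L, hi1⟩ : Fin L).val,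
        by simpa using hm⟩ : Fin n) = ⟨i, hi⟩ :=
      Fin.eq_of_val_eq (by simp only [Fin.val_mk]; omega)
    have eK : (⟨((((⟨(i - i % L) / L, hr⟩ : Fin s).val : ℤ) - 1) * L + 1 + (k1.val : ℤ)).toNat,
        hm2⟩ : Fin n) = k := Fin.eq_of_val_eq (by simp only [Fin.val_mk]; omega)
    rw [eQ, eK]
  rw [hS, hTS]
  rw [if_pos (show ((⟨i, hi⟩ : Fin n).val : ℤ) - L + 1 ≤ _ ∧ _ by
        simp only [Fin.val_mk]; omega),
      if_pos (show (⟨i % L, hi1⟩ : Fin L).val ≤ _ ∧ _ ∧ _ by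
        simp only [Fin.val_mk]; omega)]
  have hden : (∑ k ∈ Finset.univ.filter
        (fun k : Fin n => (((⟨i, hi⟩ : Fin n).val : ℕ) : ℤ) - L + 1 ≤ (k.val : ℤ) ∧
          (k.val : ℤ) ≤ (((⟨i, hi⟩ : Fin n).val : ℕ) : ℤ)),
        Real.exp ((∑ t, Q ⟨i, hi⟩ t * K k t) / Real.sqrt (dq : ℝ)))
      = ∑ k ∈ Finset.univ.filter
          (fun k : Fin (2 * L - 1) => (⟨i % L, hi1⟩ : Fin L).val ≤ k.val ∧
            k.val ≤ (⟨i % L, hi1⟩ : Fin L).val + L - 1 ∧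
            0 ≤ (((⟨(i - i % L) / L, hr⟩ : Fin s).val : ℤ) - 1) * L + 1 + (k.val : ℤ)),
          Real.exp (TA ⟨(i - i % L) / L, hr⟩ ⟨i % L, hi1⟩ k / Real.sqrt (dq : ℝ)) := by
    refine Finset.sum_nbij'
      (i := fun k => (⟨min ((k.val : ℤ) - ((((i - i % L) / L : ℕ) : ℤ) - 1) * L - 1).toNat
        (2 * L - 2), by omega⟩ : Fin (2 * L - 1)))
      (j := fun k1 => (⟨min (((((i - i % L) / L : ℕ) : ℤ) - 1) * L + 1 + (k1.val : ℤ)).toNat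
        (n - 1), by omega⟩ : Fin n)) ?_ ?_ ?_ ?_ ?_
    · intro k hk
      simp only [Finset.mem_filter, Finset.mem_univ, true_and, Fin.val_mk] at hk ⊢
      omega
    · intro k hk
      simp only [Finset.mem_filter, Finset.mem_univ, true_and, Fin.val_mk] at hk ⊢
      omega
    · intro k hk
      simp only [Finset.mem_filter, Finset.mem_univ, true_and, Fin.val_mk] at hk
      exact Fin.eq_of_val_eq (by simp only [Fin.val_mk]; omega)
    · intro k hk
      simp only [Finset.mem_filter, Finset.mem_univ, true_and, Fin.val_mk] at hk
      exact Fin.eq_of_val_eq (by simp only [Fin.val_mk]; omega)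
    · intro k hk
      simp only [Finset.mem_filter, Finset.mem_univ, true_and, Fin.val_mk] at hk
      rw [hTAval k ⟨min ((k.val : ℤ) - ((((i - i % L) / L : ℕ) : ℤ) - 1) * L - 1).toNat
          (2 * L - 2), by omega⟩ (by simp only [Fin.val_mk]; omega) (by omega) (by omega)]
  rw [hden, hTAval ⟨j, hj⟩ ⟨((j : ℤ) - ((((i - i % L) / L : ℕ) : ℤ) - 1) * L - 1).toNat, hj1⟩
      (by simp only [Fin.val_mk]; omega) (by simp only [Fin.val_mk]; omega)
      (by simp only [Fin.val_mk]; omega)]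
end

section
/- Let n, L, d_q, d_v be positive integers with L dividing n, set s = n/L, and let Q, K be real n × d_q matrices and V a real n × d_v matrix. Let S be the masked attention-score matrix of LAM (S[i,j] = exp(⟨Q_i,K_j⟩/√d_q)/Σ_{k: i−L+1 ≤ k ≤ i, k ≥ 0} exp(⟨Q_i,K_k⟩/√d_q) for i−L+1 ≤ j ≤ i, and 0 otherwise), so that LAM(Q,K,V) = S·V. Define T_S as the blocked masked softmax tensor of dimensions s × L × (2L−1) built from T_Q, T_K, and define T_V of dimensions s × (2L−1) × d_v by T_V[r, j_1, t] = V[(r−1)L + 1 + j_1, t] if (r−1)L + 1 + j_1 ≥ 0 and 0 otherwise. Let T_LAM[r, ·, ·] = T_S[r, ·, ·] · T_V[r, ·, ·] (an L × d_v matrix for each r). Then for each i ∈ {0, 1, ..., n−1}, setting i_1 = i mod L and r = (i − i_1)/L, the i-th row of LAM(Q,K,V) equals T_LAM[r, i_1, ·]. -/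
open Matrix

theorem blocked_LAM_computes_LAM_rows
    (n L dq dv s : ℕ) (hn : 0 < n) (hL : 0 < L) (hdq : 0 < dq) (hdv : 0 < dv)
    (hdvd : L ∣ n) (hs : s = n / L)
    (Q K : Matrix (Fin n) (Fin dq) ℝ) (V : Matrix (Fin n) (Fin dv) ℝ)
    -- the blocked tensors
    (TQ : Fin s → Fin L → Fin dq → ℝ)
    (TK : Fin s → Fin (2 * L - 1) → Fin dq → ℝ)
    (TA : Fin s → Fin L → Fin (2 * L - 1) → ℝ)
    (TS : Fin s → Fin L → Fin (2 * L - 1) → ℝ)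
    (TV : Fin s → Fin (2 * L - 1) → Fin dv → ℝ)
    -- the masked attention-score matrix of LAM
    (S : Matrix (Fin n) (Fin n) ℝ)
    -- `T_Q[r, i₁, t] = Q[rL + i₁, t]`
    (hTQ : ∀ (r : Fin s) (i1 : Fin L) (t : Fin dq)
      (hm : r.val * L + i1.val < n), TQ r i1 t = Q ⟨r.val * L + i1.val, hm⟩ t)
    -- `T_K[r, j₁, t] = K[(r−1)L + 1 + j₁, t]` if `(r−1)L + 1 + j₁ ≥ 0`, else `0`
    (hTK : ∀ (r : Fin s) (j1 : Fin (2 * L - 1)) (t : Fin dq),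
      (((r.val : ℤ) - 1) * L + 1 + (j1.val : ℤ) < 0 → TK r j1 t = 0) ∧
      (∀ (hm : (((r.val : ℤ) - 1) * L + 1 + (j1.val : ℤ)).toNat < n),
        0 ≤ ((r.val : ℤ) - 1) * L + 1 + (j1.val : ℤ) →
        TK r j1 t = K ⟨(((r.val : ℤ) - 1) * L + 1 + (j1.val : ℤ)).toNat, hm⟩ t))
    -- `T_A[r,·,·] = T_Q[r,·,·] · T_K[r,·,·]ᵀ`
    (hTA : ∀ (r : Fin s) (i1 : Fin L) (j1 : Fin (2 * L - 1)),
      TA r i1 j1 = ∑ t, TQ r i1 t * TK r j1 t)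
    -- `S[i,j] = exp(⟨Q_i,K_j⟩/√d_q) / Σ_{k : i−L+1 ≤ k ≤ i, k ≥ 0} exp(⟨Q_i,K_k⟩/√d_q)`
    -- when `i − L + 1 ≤ j ≤ i`, and `S[i,j] = 0` otherwise
    (hS : ∀ (i j : Fin n), S i j =
      if (i.val : ℤ) - L + 1 ≤ (j.val : ℤ) ∧ (j.val : ℤ) ≤ (i.val : ℤ) then
        Real.exp ((∑ t, Q i t * K j t) / Real.sqrt (dq : ℝ)) /
          ∑ k ∈ Finset.univ.filter
              (fun k : Fin n => (i.val : ℤ) - L + 1 ≤ (k.val : ℤ) ∧ (k.val : ℤ) ≤ (i.val : ℤ)),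
            Real.exp ((∑ t, Q i t * K k t) / Real.sqrt (dq : ℝ))
      else 0)
    -- the blocked masked softmax tensor `T_S`
    (hTS : ∀ (r : Fin s) (i1 : Fin L) (j1 : Fin (2 * L - 1)), TS r i1 j1 =
      if i1.val ≤ j1.val ∧ j1.val ≤ i1.val + L - 1 ∧
          0 ≤ ((r.val : ℤ) - 1) * L + 1 + (j1.val : ℤ) then
        Real.exp (TA r i1 j1 / Real.sqrt (dq : ℝ)) /
          ∑ k ∈ Finset.univ.filter
              (fun k : Fin (2 * L - 1) => i1.val ≤ k.val ∧ k.val ≤ i1.val + L - 1 ∧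
                0 ≤ ((r.val : ℤ) - 1) * L + 1 + (k.val : ℤ)),
            Real.exp (TA r i1 k / Real.sqrt (dq : ℝ))
      else 0)
    -- `T_V[r, j₁, t] = V[(r−1)L + 1 + j₁, t]` if `(r−1)L + 1 + j₁ ≥ 0`, else `0`
    (hTV : ∀ (r : Fin s) (j1 : Fin (2 * L - 1)) (t : Fin dv),
      (((r.val : ℤ) - 1) * L + 1 + (j1.val : ℤ) < 0 → TV r j1 t = 0) ∧
      (∀ (hm : (((r.val : ℤ) - 1) * L + 1 + (j1.val : ℤ)).toNat < n),
        0 ≤ ((r.val : ℤ) - 1) * L + 1 + (j1.val : ℤ) →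
        TV r j1 t = V ⟨(((r.val : ℤ) - 1) * L + 1 + (j1.val : ℤ)).toNat, hm⟩ t)) :
    -- conclusion: for every `i`, setting `i₁ = i mod L` and `r = (i − i₁)/L`, the
    -- `i`-th row of `LAM(Q,K,V) = S·V` equals the row
    -- `T_LAM[r, i₁, ·] = T_S[r, i₁, ·] · T_V[r, ·, ·]`
    ∀ (i : Fin n) (hr : (i.val - i.val % L) / L < s) (hi1 : i.val % L < L)
      (t : Fin dv),
      (S * V) i t =
        ∑ j1 : Fin (2 * L - 1),
          TS ⟨(i.val - i.val % L) / L, hr⟩ ⟨i.val % L, hi1⟩ j1 *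
            TV ⟨(i.val - i.val % L) / L, hr⟩ j1 t := by
  intro i hr hi1 t
  set i1 : ℕ := i.val % L with hi1def
  set rv : ℕ := (i.val - i1) / L with hrvdef
  have hL1 : 1 ≤ L := hL
  have h2L : 0 < 2 * L - 1 := by omega
  have hdm : L * (i.val / L) + i.val % L = i.val := Nat.div_add_mod i.val L
  have hrv : rv = i.val / L := by
    have h1 : i.val - i1 = L * (i.val / L) := by omega
    rw [hrvdef, h1, Nat.mul_div_cancel_left _ hL]
  have hri : rv * L + i1 = i.val := by
    have h2 := Nat.mul_comm (i.val / L) L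
    rw [hrv]; omega
  have hriN : rv * L = i.val - i1 := by omega
  have hriZ : (rv : ℤ) * L + (i1 : ℤ) = (i.val : ℤ) := by exact_mod_cast hri
  have hz0 : ((rv : ℤ) - 1) * L + 1 = (i.val : ℤ) - (i1 : ℤ) - (L : ℤ) + 1 := by
    have h2 : ((rv : ℤ) - 1) * L = (rv : ℤ) * L - L := by ring
    linarith
  have hin : i.val < n := i.isLt
  set r : Fin s := ⟨rv, hr⟩ with hrdef
  set i1' : Fin L := ⟨i1, hi1⟩ with hi1'def
  have hrval : r.val = rv := rfl
  have hi1val : i1'.val = i1 := rfl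
  -- the key bijection lemma
  have key : ∀ (F : Fin n → ℝ) (G : Fin (2 * L - 1) → ℝ),
      (∀ (j1 : Fin (2 * L - 1)), i1 ≤ j1.val → j1.val ≤ i1 + L - 1 →
        0 ≤ ((rv : ℤ) - 1) * L + 1 + (j1.val : ℤ) →
        ∀ (hm : (((rv : ℤ) - 1) * L + 1 + (j1.val : ℤ)).toNat < n),
          G j1 = F ⟨(((rv : ℤ) - 1) * L + 1 + (j1.val : ℤ)).toNat, hm⟩) →
      ∑ j1 ∈ Finset.univ.filter (fun j1 : Fin (2 * L - 1) =>
          i1 ≤ j1.val ∧ j1.val ≤ i1 + L - 1 ∧ 0 ≤ ((rv : ℤ) - 1) * L + 1 + (j1.val : ℤ)), G j1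
      = ∑ j ∈ Finset.univ.filter (fun j : Fin n =>
          (i.val : ℤ) - (L : ℤ) + 1 ≤ (j.val : ℤ) ∧ (j.val : ℤ) ≤ (i.val : ℤ)), F j := by
    intro F G hFG
    refine Finset.sum_nbij'
      (i := fun j1 => (⟨(((rv : ℤ) - 1) * L + 1 + (j1.val : ℤ)).toNat % n, Nat.mod_lt _ hn⟩ : Fin n))
      (j := fun j => (⟨(j.val + L - 1 - rv * L) % (2 * L - 1), Nat.mod_lt _ h2L⟩ : Fin (2 * L - 1)))
      ?_ ?_ ?_ ?_ ?_
    · intro j1 hj1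
      simp only [Finset.mem_filter, Finset.mem_univ, true_and] at hj1 ⊢
      obtain ⟨h1, h2, h3⟩ := hj1
      simp only [hz0] at h3 ⊢
      have hm' : ((i.val : ℤ) - (i1 : ℤ) - (L : ℤ) + 1 + (j1.val : ℤ)).toNat < n := by omega
      rw [Nat.mod_eq_of_lt hm']
      omega
    · intro j hj
      simp only [Finset.mem_filter, Finset.mem_univ, true_and] at hj ⊢
      obtain ⟨h1, h2⟩ := hj
      simp only [hz0, hriN]
      have hlt : j.val + L - 1 - (i.val - i1) < 2 * L - 1 := by omega
      rw [Nat.mod_eq_of_lt hlt]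
      omega
    · intro j1 hj1
      simp only [Finset.mem_filter, Finset.mem_univ, true_and] at hj1
      obtain ⟨h1, h2, h3⟩ := hj1
      simp only [hz0] at h3
      apply Fin.ext
      simp only [hz0, hriN]
      have hm' : ((i.val : ℤ) - (i1 : ℤ) - (L : ℤ) + 1 + (j1.val : ℤ)).toNat < n := by omega
      rw [Nat.mod_eq_of_lt hm']
      have hlt2 : ((i.val : ℤ) - (i1 : ℤ) - (L : ℤ) + 1 + (j1.val : ℤ)).toNat + L - 1 - (i.val - i1)
          < 2 * L - 1 := by omega
      rw [Nat.mod_eq_of_lt hlt2]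
      omega
    · intro j hj
      simp only [Finset.mem_filter, Finset.mem_univ, true_and] at hj
      obtain ⟨h1, h2⟩ := hj
      apply Fin.ext
      simp only [hz0, hriN]
      have hlt : j.val + L - 1 - (i.val - i1) < 2 * L - 1 := by omega
      rw [Nat.mod_eq_of_lt hlt]
      have hm' : ((i.val : ℤ) - (i1 : ℤ) - (L : ℤ) + 1 + ((j.val + L - 1 - (i.val - i1) : ℕ) : ℤ)).toNat
          < n := by omega
      rw [Nat.mod_eq_of_lt hm']
      omega
    · intro j1 hj1
      simp only [Finset.mem_filter, Finset.mem_univ, true_and] at hj1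
      obtain ⟨h1, h2, h3⟩ := hj1
      have hm : (((rv : ℤ) - 1) * L + 1 + (j1.val : ℤ)).toNat < n := by
        have h3' := h3
        simp only [hz0] at h3' ⊢
        omega
      have hmod : (((rv : ℤ) - 1) * L + 1 + (j1.val : ℤ)).toNat % n
          = (((rv : ℤ) - 1) * L + 1 + (j1.val : ℤ)).toNat := Nat.mod_eq_of_lt hm
      rw [hFG j1 h1 h2 h3 hm]
      congr 1
      exact Fin.ext hmod.symm
  -- TA coincides with the inner products against the real rows
  have hTAeq : ∀ (k : Fin (2 * L - 1)),
      0 ≤ ((rv : ℤ) - 1) * L + 1 + (k.val : ℤ) →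
      ∀ (hm : (((rv : ℤ) - 1) * L + 1 + (k.val : ℤ)).toNat < n),
      TA r i1' k = ∑ t', Q i t' * K ⟨(((rv : ℤ) - 1) * L + 1 + (k.val : ℤ)).toNat, hm⟩ t' := by
    intro k hk hm
    rw [hTA]
    refine Finset.sum_congr rfl fun t' _ => ?_
    have h1 : r.val * L + i1'.val < n := by
      simp only [hrval, hi1val]; omega
    rw [hTQ r i1' t' h1, (hTK r k t').2 (by simpa only [hrval] using hm) (by simpa only [hrval] using hk)]
    have hfe : (⟨r.val * L + i1'.val, h1⟩ : Fin n) = i := Fin.ext (by simp only [hrval, hi1val]; omega)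
    rw [hfe]
  -- rewrite both sides as filtered sums
  rw [Matrix.mul_apply]
  have hLHS : (∑ j, S i j * V j t) = ∑ j ∈ Finset.univ.filter
      (fun j : Fin n => (i.val : ℤ) - (L : ℤ) + 1 ≤ (j.val : ℤ) ∧ (j.val : ℤ) ≤ (i.val : ℤ)),
      S i j * V j t := by
    symm
    apply Finset.sum_filter_of_ne
    intro j _ hne
    by_contra hcj
    exact hne (by rw [hS i j, if_neg hcj, zero_mul])
  have hRHS : (∑ j1 : Fin (2 * L - 1), TS r i1' j1 * TV r j1 t)
      = ∑ j1 ∈ Finset.univ.filter (fun j1 : Fin (2 * L - 1) =>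
          i1 ≤ j1.val ∧ j1.val ≤ i1 + L - 1 ∧ 0 ≤ ((rv : ℤ) - 1) * L + 1 + (j1.val : ℤ)),
          TS r i1' j1 * TV r j1 t := by
    symm
    apply Finset.sum_filter_of_ne
    intro j1 _ hne
    by_contra hcj
    refine hne ?_
    rw [hTS r i1' j1, if_neg (by simpa only [hrval, hi1val] using hcj), zero_mul]
  rw [hLHS, hRHS]
  symm
  apply key
  intro j1 h1 h2 h3 hm
  -- per-term equality
  rw [hTS r i1' j1, if_pos (show i1'.val ≤ j1.val ∧ j1.val ≤ i1'.val + L - 1 ∧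
      0 ≤ ((r.val : ℤ) - 1) * L + 1 + (j1.val : ℤ) by
    simp only [hrval, hi1val]; exact ⟨h1, h2, h3⟩)]
  rw [(hTV r j1 t).2 (by simpa only [hrval] using hm) (by simpa only [hrval] using h3)]
  rw [hS i ⟨(((rv : ℤ) - 1) * L + 1 + (j1.val : ℤ)).toNat, hm⟩]
  rw [if_pos (by
    simp only [hz0]
    have h3' := h3
    simp only [hz0] at h3'
    constructor <;> omega)]
  congr 2
  · rw [hTAeq j1 h3 hm]
  · -- denominators agree
    simp only [hrval, hi1val]
    apply key
    intro k hk1 hk2 hk3 hmk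
    rw [hTAeq k hk3 hmk]
end
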